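/- Let S be a tangent-valued 2-form and ψ a 1-form on a smooth manifold, and let Φ(S,ψ)(X,Y,Z) := (L_{S(X,Y)}ψ)(Z) − (L_X(ψ∘S))(Z,Y) − (L_Y(ψ∘S))(X,Z) + (ψ∘S)([X,Y],Z) be the Yano–Ako operator. Then its full antisymmetrization satisfies 3·Alt Φ(S,ψ) = L_S ψ + 2·d(ψ∘S), where L_S ψ = i_S dψ + d(i_S ψ) is the Frölicher–Nijenhuis Lie derivative and Alt is the antisymmetrization over the three arguments. -/

import Mathlib

open scoped BigOperators

noncomputable section

/-- Points of the model space `ℝ^m`. -/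
abbrev Pt (m : ℕ) := Fin m → ℝ
/-- Vector fields (or 1-forms) on `ℝ^m`, given by their components. -/
abbrev VF (m : ℕ) := Pt m → Fin m → ℝ
/-- (0,2)-tensor fields (or (1,1)-tensor fields) on `ℝ^m`, given by components. -/
abbrev T02 (m : ℕ) := Pt m → Fin m → Fin m → ℝ
/-- (0,3)- or (1,2)-tensor fields on `ℝ^m`, given by components. -/
abbrev T3 (m : ℕ) := Pt m → Fin m → Fin m → Fin m → ℝ

variable {m : ℕ}

/-- `i`-th partial derivative of a scalar function. -/
def pd (i : Fin m) (f : Pt m → ℝ) (x : Pt m) : ℝ :=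
  fderiv ℝ f x (Pi.single i 1)

/-- Derivative of a function `f` along a vector field `X`. -/
def Xdot (X : VF m) (f : Pt m → ℝ) (x : Pt m) : ℝ :=
  ∑ k, X x k * pd k f x

/-- Lie bracket of vector fields, in components. -/
def lieB (X Y : VF m) : VF m := fun x i =>
  ∑ k, (X x k * pd k (fun y => Y y i) x - Y x k * pd k (fun y => X y i) x)

/-- Evaluation `ψ(X)` of a 1-form on a vector field. -/
def ev1 (ψ X : VF m) (x : Pt m) : ℝ := ∑ i, ψ x i * X x i

/-- Exterior derivative of a function, as a 1-form. -/
def dF (f : Pt m → ℝ) : VF m := fun x i => pd i f x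

/-- Exterior derivative of a 1-form, as a 2-form: `(dψ)_{ij} = ∂_i ψ_j - ∂_j ψ_i`. -/
def d2 (ψ : VF m) : T02 m := fun x i j =>
  pd i (fun y => ψ y j) x - pd j (fun y => ψ y i) x

/-- Evaluation of a (0,2)-tensor field on two vector fields. -/
def ev2 (T : T02 m) (X Y : VF m) (x : Pt m) : ℝ :=
  ∑ i, ∑ j, T x i j * X x i * Y x j

/-- Lie derivative of a 1-form `ψ` along `X`, evaluated on `Y`:
`(L_X ψ)(Y) = X·(ψ(Y)) - ψ([X,Y])`. -/
def lie1 (X ψ Y : VF m) (x : Pt m) : ℝ :=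
  Xdot X (ev1 ψ Y) x - ev1 ψ (lieB X Y) x

/-- Lie derivative of a (0,2)-tensor field `T` along `X`, evaluated on `Y, Z`:
`(L_X T)(Y,Z) = X·T(Y,Z) - T([X,Y],Z) - T(Y,[X,Z])`. -/
def lie2 (X : VF m) (T : T02 m) (Y Z : VF m) (x : Pt m) : ℝ :=
  Xdot X (ev2 T Y Z) x - ev2 T (lieB X Y) Z x - ev2 T Y (lieB X Z) x

/-- Application of a (1,1)-tensor field to a vector field: `(φX)^i = φ^i_j X^j`. -/
def appT (φ : T02 m) (X : VF m) : VF m := fun x i => ∑ j, φ x i j * X x j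

/-- `(ψ∘₁φ)(X,Y) = ψ(φX,Y)`, in components `(ψ∘₁φ)_{ij} = ψ_{aj} φ^a_i`. -/
def comp1 (ψ φ : T02 m) : T02 m := fun x i j => ∑ a, ψ x a j * φ x a i

/-- `(ψ∘₂φ)(X,Y) = ψ(X,φY)`, in components `(ψ∘₂φ)_{ij} = ψ_{ia} φ^a_j`. -/
def comp2 (ψ φ : T02 m) : T02 m := fun x i j => ∑ a, ψ x i a * φ x a j

/-- Composition `ψ∘φ` of a 1-form with a (1,1)-tensor field:  `(ψ∘φ)_i = ψ_a φ^a_i`. -/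
def compF (ψ : VF m) (φ : T02 m) : VF m := fun x i => ∑ a, ψ x a * φ x a i

/-- Exterior derivative of a 2-form `T`, as a 3-form:
`(dT)_{ijk} = ∂_i T_{jk} - ∂_j T_{ik} + ∂_k T_{ij}`. -/
def d3 (T : T02 m) : T3 m := fun x i j k =>
  pd i (fun y => T y j k) x - pd j (fun y => T y i k) x + pd k (fun y => T y i j) x

/-- Evaluation of a (0,3)-tensor field on three vector fields. -/
def ev3 (U : T3 m) (X Y Z : VF m) (x : Pt m) : ℝ :=
  ∑ i, ∑ j, ∑ k, U x i j k * X x i * Y x j * Z x k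

/-- Pointwise sum of vector fields. -/
def addV (X Y : VF m) : VF m := fun x i => X x i + Y x i

/-- Pointwise multiplication of a vector field by a function. -/
def smulV (f : Pt m → ℝ) (X : VF m) : VF m := fun x i => f x * X x i


/-- Application of a (1,2)-tensor field (tangent-valued 2-form) to two vector
fields: `S(X,Y)^a = S^a_{jk} X^j Y^k`. -/
def appS (S : T3 m) (X Y : VF m) : VF m := fun x a =>
  ∑ j, ∑ k, S x a j k * X x j * Y x k

/-- The (0,2)-tensor field `ψ∘S`, `(ψ∘S)(X,Y) = ψ(S(X,Y))`, in components
`(ψ∘S)_{jk} = ψ_a S^a_{jk}`. -/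
def psiS (ψ : VF m) (S : T3 m) : T02 m := fun x j k => ∑ a, ψ x a * S x a j k

/-- The Yano–Ako operator
`Φ(S,ψ)(X,Y,Z) = (L_{S(X,Y)}ψ)(Z) − (L_X(ψ∘S))(Z,Y) − (L_Y(ψ∘S))(X,Z)
  + (ψ∘S)([X,Y],Z)`. -/
def yanoAko (S : T3 m) (ψ : VF m) (X Y Z : VF m) (x : Pt m) : ℝ :=
  lie1 (appS S X Y) ψ Z x - lie2 X (psiS ψ S) Z Y x - lie2 Y (psiS ψ S) X Z x
  + ev2 (psiS ψ S) (lieB X Y) Z x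


/-- The Frölicher–Nijenhuis Lie derivative `L_S ψ := i_S dψ + d(i_S ψ)` of a
1-form `ψ` along a tangent-valued 2-form `S`, evaluated on `X, Y, Z`, where
`i_S ψ = ψ∘S` and
`(i_S dψ)(X,Y,Z) = dψ(S(X,Y),Z) + dψ(S(Y,Z),X) + dψ(S(Z,X),Y)`. -/
def lieS (S : T3 m) (ψ : VF m) (X Y Z : VF m) (x : Pt m) : ℝ :=
  (ev2 (d2 ψ) (appS S X Y) Z x + ev2 (d2 ψ) (appS S Y Z) X x
    + ev2 (d2 ψ) (appS S Z X) Y x)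
  + ev3 (d3 (psiS ψ S)) X Y Z x

/-- Antisymmetrization of a ternary operator on vector fields:
`(Alt T)(X,Y,Z) = (1/6) ∑_σ sgn(σ) T(σ(X,Y,Z))`. -/
def altOp (T : VF m → VF m → VF m → Pt m → ℝ) (X Y Z : VF m) (x : Pt m) : ℝ :=
  (1 / 6 : ℝ) * (T X Y Z x - T Y X Z x + T Y Z X x - T Z Y X x
    + T Z X Y x - T X Z Y x)

/-! The proof works with the flat connection `∇_X Y = dirDeriv X Y` of `ℝ^m`, which is
torsion-free: `[X,Y] = ∇_X Y - ∇_Y X`, while `dψ` and `dT` are the antisymmetrisations of `∇ψ`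
and `∇T`. Rewriting every Lie derivative through `∇`, all derivatives of the vector fields cancel
and `Φ(S,ψ)(X,Y,Z) = dψ(S(X,Y),Z) + d(ψ∘S)(X,Y,Z)`. This is antisymmetric in `X, Y`, so
`3·Alt Φ(S,ψ)` is its cyclic sum, that is `i_S dψ + 3·d(ψ∘S)`. -/

open Finset

def dirDeriv (X Y : VF m) : VF m := fun x i => Xdot X (fun y => Y y i) x

def dirDeriv₂ (X : VF m) (T : T02 m) : T02 m := fun x i j => Xdot X (fun y => T y i j) x

theorem Xdot_eq_fderiv (X : VF m) (f : Pt m → ℝ) (x : Pt m) :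
    Xdot X f x = fderiv ℝ f x (X x) := by
  conv_rhs => rw [← Finset.univ_sum_single (X x)]
  simp only [Xdot, pd, map_sum]
  refine sum_congr rfl fun k _ => ?_
  rw [← smul_eq_mul, ← map_smul, ← Pi.single_smul, smul_eq_mul, mul_one]

theorem Xdot_neg (X : VF m) (f : Pt m → ℝ) (x : Pt m) :
    Xdot X (fun y => -f y) x = -Xdot X f x := by
  simp only [Xdot_eq_fderiv, fderiv_fun_neg, neg_apply]

section Leibniz

variable {x : Pt m}

theorem Xdot_sum {ι : Type*} [Fintype ι] {f : ι → Pt m → ℝ}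
    (hf : ∀ i, DifferentiableAt ℝ (f i) x) (X : VF m) :
    Xdot X (fun y => ∑ i, f i y) x = ∑ i, Xdot X (f i) x := by
  simp only [Xdot_eq_fderiv, fderiv_fun_sum fun i _ => hf i, _root_.sum_apply]

theorem Xdot_mul {f g : Pt m → ℝ} (hf : DifferentiableAt ℝ f x) (hg : DifferentiableAt ℝ g x)
    (X : VF m) : Xdot X (fun y => f y * g y) x = Xdot X f x * g x + f x * Xdot X g x := by
  simp only [Xdot_eq_fderiv, fderiv_fun_mul hf hg, add_apply, smul_apply, smul_eq_mul]
  ring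

theorem Xdot_ev1 {ψ Y : VF m} (hψ : DifferentiableAt ℝ ψ x) (hY : DifferentiableAt ℝ Y x)
    (X : VF m) : Xdot X (ev1 ψ Y) x = ev1 (dirDeriv X ψ) Y x + ev1 ψ (dirDeriv X Y) x := by
  have hψi := differentiableAt_pi.1 hψ
  have hYi := differentiableAt_pi.1 hY
  rw [show ev1 ψ Y = fun y => ∑ i, ψ y i * Y y i from rfl,
    Xdot_sum fun i => (hψi i).fun_mul (hYi i)]
  simp only [Xdot_mul (hψi _) (hYi _), ev1, dirDeriv, sum_add_distrib]

theorem Xdot_ev2 {T : T02 m} {Y Z : VF m} (hT : DifferentiableAt ℝ T x)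
    (hY : DifferentiableAt ℝ Y x) (hZ : DifferentiableAt ℝ Z x) (X : VF m) :
    Xdot X (ev2 T Y Z) x = ev2 (dirDeriv₂ X T) Y Z x + ev2 T (dirDeriv X Y) Z x
      + ev2 T Y (dirDeriv X Z) x := by
  have hTij i j := differentiableAt_pi.1 (differentiableAt_pi.1 hT i) j
  have hYi := differentiableAt_pi.1 hY
  have hZi := differentiableAt_pi.1 hZ
  rw [show ev2 T Y Z = fun y => ∑ i, ∑ j, T y i j * Y y i * Z y j from rfl,
    Xdot_sum fun i => DifferentiableAt.fun_sum fun j _ =>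
      ((hTij i j).fun_mul (hYi i)).fun_mul (hZi j)]
  simp only [Xdot_sum fun j => ((hTij _ j).fun_mul (hYi _)).fun_mul (hZi j),
    Xdot_mul ((hTij _ _).fun_mul (hYi _)) (hZi _), Xdot_mul (hTij _ _) (hYi _),
    ev2, dirDeriv, dirDeriv₂, ← sum_add_distrib]
  refine sum_congr rfl fun i _ => sum_congr rfl fun j _ => ?_
  ring

end Leibniz

section Torsion

variable (x : Pt m)

theorem lieB_eq_dirDeriv_sub (X Y : VF m) (i : Fin m) :
    lieB X Y x i = dirDeriv X Y x i - dirDeriv Y X x i := by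
  simp only [lieB, dirDeriv, Xdot, sum_sub_distrib]

theorem ev1_lieB (ψ X Y : VF m) :
    ev1 ψ (lieB X Y) x = ev1 ψ (dirDeriv X Y) x - ev1 ψ (dirDeriv Y X) x := by
  simp only [ev1, lieB_eq_dirDeriv_sub, mul_sub, sum_sub_distrib]

theorem ev2_lieB_left (T : T02 m) (X Y Z : VF m) :
    ev2 T (lieB X Y) Z x = ev2 T (dirDeriv X Y) Z x - ev2 T (dirDeriv Y X) Z x := by
  simp only [ev2, lieB_eq_dirDeriv_sub, mul_sub, sub_mul, sum_sub_distrib]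

theorem ev2_lieB_right (T : T02 m) (X Y Z : VF m) :
    ev2 T X (lieB Y Z) x = ev2 T X (dirDeriv Y Z) x - ev2 T X (dirDeriv Z Y) x := by
  simp only [ev2, lieB_eq_dirDeriv_sub, mul_sub, sum_sub_distrib]

theorem ev2_d2_eq (ψ X Y : VF m) :
    ev2 (d2 ψ) X Y x = ev1 (dirDeriv X ψ) Y x - ev1 (dirDeriv Y ψ) X x := by
  simp only [ev2, d2, ev1, dirDeriv, Xdot, sub_mul, sum_sub_distrib, sum_mul]
  congr 1
  · rw [sum_comm]
    exact sum_congr rfl fun j _ => sum_congr rfl fun i _ => by ring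
  · exact sum_congr rfl fun i _ => sum_congr rfl fun j _ => by ring

theorem ev3_d3_eq (T : T02 m) (X Y Z : VF m) :
    ev3 (d3 T) X Y Z x = ev2 (dirDeriv₂ X T) Y Z x - ev2 (dirDeriv₂ Y T) X Z x
      + ev2 (dirDeriv₂ Z T) X Y x := by
  simp only [ev3, d3, ev2, dirDeriv₂, Xdot, add_mul, sub_mul, sum_add_distrib, sum_sub_distrib,
    sum_mul]
  congr 1
  congr 1
  · rw [sum_comm]
    refine sum_congr rfl fun j _ => ?_
    rw [sum_comm]
    exact sum_congr rfl fun k _ => sum_congr rfl fun i _ => by ring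
  · refine sum_congr rfl fun i _ => ?_
    rw [sum_comm]
    exact sum_congr rfl fun k _ => sum_congr rfl fun j _ => by ring
  · exact sum_congr rfl fun i _ => sum_congr rfl fun j _ => sum_congr rfl fun k _ => by ring

end Torsion

section Antisymmetry

variable {x : Pt m}

theorem ev2_swap {T : T02 m} (hT : ∀ i j, T x i j = -T x j i) (X Y : VF m) :
    ev2 T Y X x = -ev2 T X Y x := by
  simp only [ev2]
  rw [sum_comm, ← sum_neg_distrib]
  refine sum_congr rfl fun i _ => ?_
  rw [← sum_neg_distrib]
  refine sum_congr rfl fun j _ => ?_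
  rw [hT j i]
  ring

theorem dirDeriv₂_antisymm {T : T02 m} (hT : ∀ y i j, T y i j = -T y j i) (X : VF m)
    (x : Pt m) (i j : Fin m) : dirDeriv₂ X T x i j = -dirDeriv₂ X T x j i := by
  simp only [dirDeriv₂, funext fun y => hT y i j, Xdot_neg]

theorem ev3_d3_swap {T : T02 m} (hT : ∀ y i j, T y i j = -T y j i) (X Y Z : VF m) :
    ev3 (d3 T) Y X Z x = -ev3 (d3 T) X Y Z x := by
  rw [ev3_d3_eq, ev3_d3_eq, ev2_swap (dirDeriv₂_antisymm hT Z x) X Y]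
  ring

theorem ev3_d3_rotate {T : T02 m} (hT : ∀ y i j, T y i j = -T y j i) (X Y Z : VF m) :
    ev3 (d3 T) Y Z X x = ev3 (d3 T) X Y Z x := by
  rw [ev3_d3_eq, ev3_d3_eq, ev2_swap (dirDeriv₂_antisymm hT Y x) X Z,
    ev2_swap (dirDeriv₂_antisymm hT Z x) X Y]
  ring

end Antisymmetry

section LieDerivatives

variable {x : Pt m}

theorem lie1_eq {W ψ Z : VF m} (hW : DifferentiableAt ℝ W x) (hψ : DifferentiableAt ℝ ψ x)
    (hZ : DifferentiableAt ℝ Z x) :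
    lie1 W ψ Z x = ev2 (d2 ψ) W Z x + Xdot Z (ev1 ψ W) x := by
  rw [lie1, Xdot_ev1 hψ hZ, Xdot_ev1 hψ hW, ev1_lieB, ev2_d2_eq]
  ring

theorem ev3_d3_eq_lie2 {T : T02 m} (hT : DifferentiableAt ℝ T x)
    (hanti : ∀ y i j, T y i j = -T y j i) {X Y Z : VF m} (hX : DifferentiableAt ℝ X x)
    (hY : DifferentiableAt ℝ Y x) (hZ : DifferentiableAt ℝ Z x) :
    ev3 (d3 T) X Y Z x
      = Xdot Z (ev2 T X Y) x - lie2 X T Z Y x - lie2 Y T X Z x + ev2 T (lieB X Y) Z x := by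
  rw [lie2, lie2, Xdot_ev2 hT hX hY, Xdot_ev2 hT hZ hY, Xdot_ev2 hT hX hZ, ev2_lieB_left,
    ev2_lieB_left, ev2_lieB_left, ev2_lieB_right, ev2_lieB_right, ev3_d3_eq,
    ev2_swap (dirDeriv₂_antisymm hanti X x) Y Z, ev2_swap (hanti x) (dirDeriv Y X) Z]
  ring

end LieDerivatives

section YanoAko

variable {S : T3 m} {ψ : VF m} {x : Pt m}

theorem ev1_appS (ψ : VF m) (S : T3 m) (X Y : VF m) :
    ev1 ψ (appS S X Y) = ev2 (psiS ψ S) X Y := by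
  funext x
  simp only [ev1, appS, ev2, psiS, mul_sum, sum_mul]
  rw [sum_comm]
  refine sum_congr rfl fun j _ => ?_
  rw [sum_comm]
  exact sum_congr rfl fun k _ => sum_congr rfl fun a _ => by ring

theorem psiS_antisymm (hS : ∀ y a j k, S y a j k = -S y a k j) (y : Pt m) (j k : Fin m) :
    psiS ψ S y j k = -psiS ψ S y k j := by
  simp only [psiS]
  rw [← sum_neg_distrib]
  exact sum_congr rfl fun a _ => by rw [hS y a j k, mul_neg]

theorem appS_swap (hS : ∀ a j k, S x a j k = -S x a k j) (X Y : VF m) (a : Fin m) :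
    appS S Y X x a = -appS S X Y x a := by
  simp only [appS]
  rw [sum_comm, ← sum_neg_distrib]
  refine sum_congr rfl fun j _ => ?_
  rw [← sum_neg_distrib]
  refine sum_congr rfl fun k _ => ?_
  rw [hS a k j]
  ring

theorem ev2_appS_swap (hS : ∀ a j k, S x a j k = -S x a k j) (T : T02 m) (X Y Z : VF m) :
    ev2 T (appS S Y X) Z x = -ev2 T (appS S X Y) Z x := by
  simp only [ev2, appS_swap hS X Y, mul_neg, neg_mul, sum_neg_distrib]

theorem differentiableAt_appS (hS : DifferentiableAt ℝ S x) {X Y : VF m}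
    (hX : DifferentiableAt ℝ X x) (hY : DifferentiableAt ℝ Y x) :
    DifferentiableAt ℝ (appS S X Y) x := by
  have hSajk a j k := differentiableAt_pi.1 (differentiableAt_pi.1 (differentiableAt_pi.1 hS a) j) k
  exact differentiableAt_pi.2 fun a => DifferentiableAt.fun_sum fun j _ =>
    DifferentiableAt.fun_sum fun k _ =>
      ((hSajk a j k).fun_mul (differentiableAt_pi.1 hX j)).fun_mul (differentiableAt_pi.1 hY k)

theorem differentiableAt_psiS (hψ : DifferentiableAt ℝ ψ x) (hS : DifferentiableAt ℝ S x) :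
    DifferentiableAt ℝ (psiS ψ S) x := by
  have hSajk a j k := differentiableAt_pi.1 (differentiableAt_pi.1 (differentiableAt_pi.1 hS a) j) k
  exact differentiableAt_pi.2 fun j => differentiableAt_pi.2 fun k =>
    DifferentiableAt.fun_sum fun a _ => (differentiableAt_pi.1 hψ a).fun_mul (hSajk a j k)

theorem yanoAko_eq (hS : DifferentiableAt ℝ S x) (hψ : DifferentiableAt ℝ ψ x)
    (hanti : ∀ y a j k, S y a j k = -S y a k j) {X Y Z : VF m} (hX : DifferentiableAt ℝ X x)
    (hY : DifferentiableAt ℝ Y x) (hZ : DifferentiableAt ℝ Z x) :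
    yanoAko S ψ X Y Z x = ev2 (d2 ψ) (appS S X Y) Z x + ev3 (d3 (psiS ψ S)) X Y Z x := by
  rw [yanoAko, lie1_eq (differentiableAt_appS hS hX hY) hψ hZ, ev1_appS,
    ev3_d3_eq_lie2 (differentiableAt_psiS hψ hS) (psiS_antisymm hanti) hX hY hZ]
  ring

theorem yanoAko_swap (hS : DifferentiableAt ℝ S x) (hψ : DifferentiableAt ℝ ψ x)
    (hanti : ∀ y a j k, S y a j k = -S y a k j) {X Y Z : VF m} (hX : DifferentiableAt ℝ X x)
    (hY : DifferentiableAt ℝ Y x) (hZ : DifferentiableAt ℝ Z x) :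
    yanoAko S ψ Y X Z x = -yanoAko S ψ X Y Z x := by
  rw [yanoAko_eq hS hψ hanti hY hX hZ, yanoAko_eq hS hψ hanti hX hY hZ,
    ev2_appS_swap (hanti x), ev3_d3_swap (psiS_antisymm hanti)]
  ring

end YanoAko

theorem three_mul_altOp_of_swap {T : VF m → VF m → VF m → Pt m → ℝ} {X Y Z : VF m} {x : Pt m}
    (hXY : T Y X Z x = -T X Y Z x) (hYZ : T Z Y X x = -T Y Z X x)
    (hZX : T X Z Y x = -T Z X Y x) :
    3 * altOp T X Y Z x = T X Y Z x + T Y Z X x + T Z X Y x := by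
  rw [altOp, hXY, hYZ, hZX]
  ring

/-- Remark 4.3: the full antisymmetrization of the Yano–Ako operator satisfies
`3·Alt Φ(S,ψ) = L_S ψ + 2·d(ψ∘S)`. -/
theorem stmt19 (m : ℕ) (S : T3 m) (ψ : VF m)
    (hS : ContDiff ℝ (⊤ : ℕ∞) S) (hψ : ContDiff ℝ (⊤ : ℕ∞) ψ)
    (hanti : ∀ x a j k, S x a j k = - S x a k j)
    (X Y Z : VF m) (hX : ContDiff ℝ (⊤ : ℕ∞) X) (hY : ContDiff ℝ (⊤ : ℕ∞) Y)
    (hZ : ContDiff ℝ (⊤ : ℕ∞) Z) :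
    ∀ x : Pt m,
      3 * altOp (yanoAko S ψ) X Y Z x
        = lieS S ψ X Y Z x + 2 * ev3 (d3 (psiS ψ S)) X Y Z x := by
  intro x
  have hSx := hS.differentiable (by simp) x
  have hψx := hψ.differentiable (by simp) x
  have hXx := hX.differentiable (by simp) x
  have hYx := hY.differentiable (by simp) x
  have hZx := hZ.differentiable (by simp) x
  rw [three_mul_altOp_of_swap (yanoAko_swap hSx hψx hanti hXx hYx hZx)
      (yanoAko_swap hSx hψx hanti hYx hZx hXx) (yanoAko_swap hSx hψx hanti hZx hXx hYx),
    yanoAko_eq hSx hψx hanti hXx hYx hZx, yanoAko_eq hSx hψx hanti hYx hZx hXx,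
    yanoAko_eq hSx hψx hanti hZx hXx hYx, ev3_d3_rotate (psiS_antisymm hanti) Y Z X,
    ev3_d3_rotate (psiS_antisymm hanti) X Y Z, lieS]
  ring
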